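/- arXiv:2209.06334 — 3 statements merged into one kernel-verified Lean document; each statement's English description precedes it below -/
import Mathlib

section
/- Let L be a join-semilattice with bottom, C a category, and S a strong monoidal functor from C(L) to End(C); for ℓ ∈ L write η̄^ℓ : Id → S_ℓ for the natural transformation (S of ⊥ ≤ ℓ) ∘ (unit iso)⁻¹. Suppose an object A admits retractions k1 : S_{ℓ1} A → A and k2 : S_{ℓ2} A → A of η̄^{ℓ1}_A and η̄^{ℓ2}_A respectively (k_i ∘ η̄^{ℓ_i}_A = id). Then for every ℓ with ℓ ≤ ℓ1 ∨ ℓ2, the morphism k := k1 ∘ S_{ℓ1}(k2) ∘ δ^{ℓ1,ℓ2}_A ∘ (S(ℓ ≤ ℓ1∨ℓ2))_A : S_ℓ A → A is a retraction of η̄^ℓ_A, i.e., k ∘ η̄^ℓ_A = id_A. -/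
open CategoryTheory

/-- A strong monoidal functor from the preorder-monoidal category `C(L)` of a
join-semilattice with bottom (tensor `⊔`, unit `⊥`) to the endofunctor category of `C`
(tensor = composition), presented componentwise: a family of endofunctors `obj ℓ`,
functorially varying along the order, with invertible unit morphism `ε` and invertible
tensorators `μ`, natural in both grades and satisfying the (strict source/target)
monoidal coherence laws. -/
structure StrongGradedFunctor (L : Type*) (C : Type*)
    [SemilatticeSup L] [OrderBot L] [Category C] where
  obj : L → C ⥤ C
  hom : ∀ {a b : L}, a ≤ b → (obj a ⟶ obj b)
  hom_id : ∀ a : L, hom (le_refl a) = 𝟙 (obj a)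
  hom_comp : ∀ {a b c : L} (h₁ : a ≤ b) (h₂ : b ≤ c),
      hom (h₁.trans h₂) = hom h₁ ≫ hom h₂
  ε : 𝟭 C ≅ obj ⊥
  μ : ∀ a b : L, obj b ⋙ obj a ≅ obj (a ⊔ b)
  μ_natural : ∀ {a a' b b' : L} (h₁ : a ≤ a') (h₂ : b ≤ b') (X : C),
      (hom h₁).app ((obj b).obj X) ≫ (obj a').map ((hom h₂).app X) ≫ (μ a' b').hom.app X =
        (μ a b).hom.app X ≫ (hom (sup_le_sup h₁ h₂)).app X
  left_unit : ∀ (b : L) (X : C),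
      ε.hom.app ((obj b).obj X) ≫ (μ ⊥ b).hom.app X = eqToHom (by simp)
  right_unit : ∀ (b : L) (X : C),
      (obj b).map (ε.hom.app X) ≫ (μ b ⊥).hom.app X = eqToHom (by simp)
  assoc : ∀ (a b c : L) (X : C),
      (μ a b).hom.app ((obj c).obj X) ≫ (μ (a ⊔ b) c).hom.app X =
        (obj a).map ((μ b c).hom.app X) ≫ (μ a (b ⊔ c)).hom.app X ≫
          eqToHom (by rw [sup_assoc])

namespace StrongGradedFunctor

variable {L C : Type*} [SemilatticeSup L] [OrderBot L] [Category C]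

/-- The unit `η̄^ℓ := S(⊥ ≤ ℓ) ∘ ε` of the monad `S_ℓ`, componentwise. -/
def etaBar (S : StrongGradedFunctor L C) (ℓ : L) (X : C) : X ⟶ (S.obj ℓ).obj X :=
  S.ε.hom.app X ≫ (S.hom (bot_le : (⊥ : L) ≤ ℓ)).app X

/-- The multiplication `S_ℓ ∘ S_ℓ → S_{ℓ ∨ ℓ} = S_ℓ` of the monad `S_ℓ`, componentwise. -/
def mult (S : StrongGradedFunctor L C) (ℓ : L) (X : C) :
    (S.obj ℓ).obj ((S.obj ℓ).obj X) ⟶ (S.obj ℓ).obj X :=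
  (S.μ ℓ ℓ).hom.app X ≫
    eqToHom (congrArg (fun l => (S.obj l).obj X) (show ℓ ⊔ ℓ = ℓ by simp))

end StrongGradedFunctor

namespace StrongGradedFunctor
variable {L C : Type*} [SemilatticeSup L] [OrderBot L] [Category C]

lemma hom_eqToHom (S : StrongGradedFunctor L C) {a b : L} (h : a = b) :
    S.hom h.le = eqToHom (by rw [h]) := by
  subst h
  rw [show (rfl : a = a).le = le_refl a from rfl, S.hom_id, eqToHom_refl]

end StrongGradedFunctor

/-- Semantic Prot-Combine: if `A` admits retractions `k1, k2` of the units
`η̄^{ℓ1}_A` and `η̄^{ℓ2}_A`, then for any `ℓ ≤ ℓ1 ∨ ℓ2` the composite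
`k := k1 ∘ S_{ℓ1}(k2) ∘ δ^{ℓ1,ℓ2}_A ∘ S(ℓ ≤ ℓ1∨ℓ2)_A` is a retraction of `η̄^ℓ_A`. -/
theorem prot_combine_semantics
    {L C : Type*} [SemilatticeSup L] [OrderBot L] [Category C]
    (S : StrongGradedFunctor L C) (ℓ1 ℓ2 ℓ : L) (A : C)
    (k1 : (S.obj ℓ1).obj A ⟶ A) (k2 : (S.obj ℓ2).obj A ⟶ A)
    (h1 : S.etaBar ℓ1 A ≫ k1 = 𝟙 A) (h2 : S.etaBar ℓ2 A ≫ k2 = 𝟙 A)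
    (hℓ : ℓ ≤ ℓ1 ⊔ ℓ2) :
    S.etaBar ℓ A ≫
      ((S.hom hℓ).app A ≫ (S.μ ℓ1 ℓ2).inv.app A ≫ (S.obj ℓ1).map k2 ≫ k1) = 𝟙 A := by
  have hbb : ((⊥ : L) ⊔ ⊥) = ⊥ := by simp
  have e1 : S.etaBar ℓ A ≫ (S.hom hℓ).app A = S.etaBar (ℓ1 ⊔ ℓ2) A := by
    simp only [StrongGradedFunctor.etaBar, Category.assoc, ← NatTrans.comp_app,
      ← S.hom_comp (bot_le : (⊥ : L) ≤ ℓ) hℓ]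
  have e2 : S.hom (bot_le : (⊥ : L) ≤ ℓ1 ⊔ ℓ2) =
      S.hom hbb.symm.le ≫ S.hom (sup_le_sup (bot_le : (⊥:L) ≤ ℓ1) (bot_le : (⊥:L) ≤ ℓ2)) := by
    rw [← S.hom_comp]
  have nat := S.μ_natural (bot_le : (⊥:L) ≤ ℓ1) (bot_le : (⊥:L) ≤ ℓ2) A
  have e3 : (S.hom (sup_le_sup (bot_le : (⊥:L) ≤ ℓ1) (bot_le : (⊥:L) ≤ ℓ2))).app A ≫
      (S.μ ℓ1 ℓ2).inv.app A =
      (S.μ ⊥ ⊥).inv.app A ≫ (S.hom (bot_le : (⊥:L) ≤ ℓ1)).app ((S.obj ⊥).obj A) ≫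
        (S.obj ℓ1).map ((S.hom (bot_le : (⊥:L) ≤ ℓ2)).app A) := by
    rw [← cancel_mono ((S.μ ℓ1 ℓ2).hom.app A)]
    simp only [Category.assoc, Iso.inv_hom_id_app, Category.comp_id]
    rw [nat, Iso.inv_hom_id_app_assoc]
  have e3' := reassoc_of% e3
  have e4 : (S.hom hbb.symm.le).app A ≫ (S.μ ⊥ ⊥).inv.app A =
      S.ε.hom.app ((S.obj ⊥).obj A) := by
    rw [S.hom_eqToHom hbb.symm, eqToHom_app, ← S.left_unit ⊥ A, Category.assoc,
      Iso.hom_inv_id_app]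
    exact Category.comp_id _
  have e4' := reassoc_of% e4
  have e5 : S.ε.hom.app ((S.obj ⊥).obj A) ≫
      (S.hom (bot_le : (⊥:L) ≤ ℓ1)).app ((S.obj ⊥).obj A) ≫
      (S.obj ℓ1).map ((S.hom (bot_le : (⊥:L) ≤ ℓ2)).app A ≫ k2) =
      ((S.hom (bot_le : (⊥:L) ≤ ℓ2)).app A ≫ k2) ≫ S.etaBar ℓ1 A := by
    rw [← (S.hom (bot_le : (⊥:L) ≤ ℓ1)).naturality, ← Category.assoc,
      ← S.ε.hom.naturality]
    simp [StrongGradedFunctor.etaBar]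
  have e5' := reassoc_of% e5
  rw [← Category.assoc, e1]
  simp only [StrongGradedFunctor.etaBar, Category.assoc]
  rw [e2]
  simp only [NatTrans.comp_app, Category.assoc]
  rw [e3', e4', ← Functor.map_comp_assoc, e5', h1, Category.comp_id, ← Category.assoc]
  exact h2
end

section
/- Let L be a join-semilattice with bottom, C a category with a terminal object ⊤, and fix ℓ ∈ L. Define a map S^ℓ on objects of C(L) by: S^ℓ(ℓ') is the identity functor on C if ℓ' ≤ ℓ, and the constant functor at ⊤ otherwise; and on the morphism ℓ1 ≤ ℓ2 by the identity natural transformation if ℓ2 ≤ ℓ, and the unique natural transformation into the constant-⊤ functor otherwise. Then S^ℓ is a well-defined functor from C(L) to the endofunctor category of C, and it is monoidal: S^ℓ(⊥) is the identity functor and S^ℓ(ℓ1) ∘ S^ℓ(ℓ2) is naturally isomorphic to S^ℓ(ℓ1 ∨ ℓ2), naturally in ℓ1 and ℓ2. -/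
open CategoryTheory

section Construction
open Limits Classical

variable {L : Type*} {C : Type*} [SemilatticeSup L] [OrderBot L] [Category C]
  [Limits.HasTerminal C]

/-- Object part of `S^ℓ`. -/
noncomputable def Sobj (ℓ ℓ' : L) : C ⥤ C :=
  if ℓ' ≤ ℓ then 𝟭 C else (Functor.const C).obj (⊤_ C)

lemma Sobj_pos (ℓ : L) {ℓ' : L} (h : ℓ' ≤ ℓ) : Sobj (C := C) ℓ ℓ' = 𝟭 C := by
  simp [Sobj, h]

lemma Sobj_neg (ℓ : L) {ℓ' : L} (h : ¬ ℓ' ≤ ℓ) :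
    Sobj (C := C) ℓ ℓ' = (Functor.const C).obj (⊤_ C) := by
  simp [Sobj, h]

/-- The unique natural transformation into the constant-`⊤` functor. -/
noncomputable def toTop (F : C ⥤ C) : F ⟶ (Functor.const C).obj (⊤_ C) where
  app X := terminal.from _
  naturality _ _ f := by apply terminal.hom_ext

lemma obj_hom_ext (ℓ : L) {ℓ2 : L} (h : ¬ ℓ2 ≤ ℓ) {Y X : C}
    (f g : Y ⟶ (Sobj ℓ ℓ2).obj X) : f = g := by
  have e : (Sobj (C := C) ℓ ℓ2).obj X = ⊤_ C := by rw [Sobj_neg ℓ h]; rfl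
  haveI : Subsingleton (Y ⟶ (Sobj ℓ ℓ2).obj X) := by rw [e]; infer_instance
  exact Subsingleton.elim f g

lemma hom_ext_neg (ℓ : L) {ℓ2 : L} (h : ¬ ℓ2 ≤ ℓ) (F : C ⥤ C)
    (f g : F ⟶ Sobj ℓ ℓ2) : f = g := by
  ext X
  exact obj_hom_ext ℓ h _ _

/-- Morphism part of `S^ℓ`. -/
noncomputable def Shom (ℓ : L) {a b : L} (h : a ≤ b) : Sobj (C := C) ℓ a ⟶ Sobj ℓ b :=
  if hb : b ≤ ℓ then eqToHom (by rw [Sobj_pos ℓ (h.trans hb), Sobj_pos ℓ hb])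
  else toTop _ ≫ eqToHom (Sobj_neg ℓ hb).symm

lemma Shom_pos (ℓ : L) {a b : L} (h : a ≤ b) (hb : b ≤ ℓ) :
    Shom (C := C) ℓ h = eqToHom (by rw [Sobj_pos ℓ (h.trans hb), Sobj_pos ℓ hb]) := by
  simp [Shom, hb]

lemma Scomp_eq (ℓ a b : L) : Sobj (C := C) ℓ b ⋙ Sobj ℓ a = Sobj ℓ (a ⊔ b) := by
  by_cases ha : a ≤ ℓ
  · by_cases hb : b ≤ ℓ
    · rw [Sobj_pos ℓ ha, Sobj_pos ℓ hb, Sobj_pos ℓ (sup_le ha hb), Functor.comp_id]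
    · rw [Sobj_pos ℓ ha, Functor.comp_id, Sobj_neg ℓ hb,
        Sobj_neg ℓ (fun hs => hb (le_sup_right.trans hs))]
  · rw [Sobj_neg ℓ ha, Sobj_neg ℓ (fun hs => ha (le_sup_left.trans hs))]
    exact CategoryTheory.Functor.ext (fun X => rfl) (fun X Y f => by simp)

end Construction

/-- The presence-absence functor `S^ℓ` of the noninterference proof for DCC_e: there is a
strong monoidal functor from `C(L)` to the endofunctors of `C` sending `ℓ' ≤ ℓ` to the
identity functor and every other `ℓ'` to the constant functor at the terminal object,
acting on order morphisms by the identity (an `eqToHom`) when the target grade is below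
`ℓ`, and by the (automatically unique) natural transformation otherwise. -/
theorem presence_absence_functor_exists
    {L : Type*} (C : Type*) [SemilatticeSup L] [OrderBot L] [Category C]
    [Limits.HasTerminal C] (ℓ : L) :
    ∃ S : StrongGradedFunctor L C,
      S.obj ⊥ = 𝟭 C ∧
      (∀ ℓ' : L, ℓ' ≤ ℓ → S.obj ℓ' = 𝟭 C) ∧
      (∀ ℓ' : L, ¬ ℓ' ≤ ℓ → S.obj ℓ' = (Functor.const C).obj (⊤_ C)) ∧
      (∀ ⦃ℓ1 ℓ2 : L⦄ (h : ℓ1 ≤ ℓ2), ℓ2 ≤ ℓ →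
        ∃ e : S.obj ℓ1 = S.obj ℓ2, S.hom h = eqToHom e) ∧
      (∀ ⦃ℓ1 ℓ2 : L⦄, ¬ ℓ2 ≤ ℓ → ∀ f g : S.obj ℓ1 ⟶ S.obj ℓ2, f = g) := by
  classical
  refine ⟨{ obj := Sobj ℓ
            hom := fun h => Shom ℓ h
            hom_id := ?_
            hom_comp := ?_
            ε := eqToIso (Sobj_pos ℓ (bot_le : (⊥ : L) ≤ ℓ)).symm
            μ := fun a b => eqToIso (Scomp_eq ℓ a b)
            μ_natural := ?_
            left_unit := ?_
            right_unit := ?_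
            assoc := ?_ },
    Sobj_pos ℓ bot_le, fun ℓ' h => Sobj_pos ℓ h, fun ℓ' h => Sobj_neg ℓ h, ?_, ?_⟩
  · intro a
    by_cases ha : a ≤ ℓ
    · simp only [Shom_pos ℓ (le_refl a) ha]; simp
    · exact hom_ext_neg ℓ ha _ _ _
  · intro a b c h₁ h₂
    by_cases hc : c ≤ ℓ
    · simp only [Shom_pos ℓ (h₁.trans h₂) hc, Shom_pos ℓ h₁ (h₂.trans hc), Shom_pos ℓ h₂ hc]; simp
    · exact hom_ext_neg ℓ hc _ _ _
  · intro a a' b b' h₁ h₂ X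
    by_cases hs : a' ⊔ b' ≤ ℓ
    · have ha' : a' ≤ ℓ := le_sup_left.trans hs
      have hb' : b' ≤ ℓ := le_sup_right.trans hs
      simp only [Shom_pos ℓ h₁ ha', Shom_pos ℓ h₂ hb', Shom_pos ℓ (sup_le_sup h₁ h₂) hs]
      simp [eqToHom_app, eqToHom_map]
    · exact obj_hom_ext ℓ hs _ _
  · intro b X
    by_cases hb : (⊥ : L) ⊔ b ≤ ℓ
    · have hb' : b ≤ ℓ := le_sup_right.trans hb
      simp [eqToHom_app, eqToHom_map]
    · exact obj_hom_ext ℓ hb _ _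
  · intro b X
    by_cases hb : b ⊔ (⊥ : L) ≤ ℓ
    · simp [eqToHom_app, eqToHom_map]
    · exact obj_hom_ext ℓ hb _ _
  · intro a b c X
    by_cases hs : a ⊔ b ⊔ c ≤ ℓ
    · simp [eqToHom_app, eqToHom_map]
    · exact obj_hom_ext ℓ hs _ _
  · intro ℓ1 ℓ2 h h2
    exact ⟨(by rw [Sobj_pos ℓ (h.trans h2), Sobj_pos ℓ h2] :
      Sobj (C := C) ℓ ℓ1 = Sobj ℓ ℓ2), Shom_pos ℓ h h2⟩
  · intro ℓ1 ℓ2 h f g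
    exact hom_ext_neg ℓ h _ f g
end

section
/- Consider the category whose objects are pairs of a type X together with two binary relations R_P and R_S on X, and whose morphisms (X,R_P,R_S) → (X',R'_P,R'_S) are functions h : X → X' such that R_P x1 x2 implies R'_P (h x1) (h x2) and R_S x1 x2 implies R'_S (h x1) (h x2). Define the product of two objects componentwise with relations ((x1,y1),(x2,y2)) related at level i iff (x1,x2) and (y1,y2) are both related at level i, and define the candidate exponential Y ⇒ Z to have underlying set Hom(Y,Z) with f and g related at level i iff for all (y1,y2) related at level i in Y, (f y1, g y2) are related at level i in Z. Let X := (Bool, R_P = R_S = {(false,false)}), Y := (Bool, R_P = the total relation, R_S = the diagonal), and Z := (Bool, R_P = R_S = the diagonal). Then the set Hom(X × Y, Z) has exactly 8 elements while Hom(X, Y ⇒ Z) has exactly 4 elements; in particular, the candidate exponential Y ⇒ Z does not satisfy the universal property of an exponential object. -/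
/-- An object of the relational category `DC` over the two-point lattice
`Public ⊏ Secret`: a type with two binary relations. -/
structure RelObj where
  carrier : Type
  RP : carrier → carrier → Prop
  RS : carrier → carrier → Prop

/-- Morphisms of `DC`: functions preserving both relations. -/
def DCHom (X Y : RelObj) : Type :=
  { h : X.carrier → Y.carrier //
      (∀ a b, X.RP a b → Y.RP (h a) (h b)) ∧ (∀ a b, X.RS a b → Y.RS (h a) (h b)) }

/-- The product of `DC`-objects, with relations defined componentwise. -/
def RelObj.prod (X Y : RelObj) : RelObj where
  carrier := X.carrier × Y.carrier
  RP := fun p q => X.RP p.1 q.1 ∧ Y.RP p.2 q.2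
  RS := fun p q => X.RS p.1 q.1 ∧ Y.RS p.2 q.2

/-- The candidate exponential of `DC`-objects: the set of morphisms, with `f, g` related
at a level iff they send related arguments to related results at that level. -/
def RelObj.exp (Y Z : RelObj) : RelObj where
  carrier := DCHom Y Z
  RP := fun f g => ∀ a b, Y.RP a b → Z.RP (f.1 a) (g.1 b)
  RS := fun f g => ∀ a b, Y.RS a b → Z.RS (f.1 a) (g.1 b)

/-- `X := (Bool, R_P = R_S = {(false, false)})`. -/
def Xctr : RelObj := ⟨Bool, fun a b => a = false ∧ b = false, fun a b => a = false ∧ b = false⟩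

/-- `Y := (Bool, R_P = total, R_S = diagonal)`. -/
def Yctr : RelObj := ⟨Bool, fun _ _ => True, fun a b => a = b⟩

/-- `Z := (Bool, R_P = R_S = diagonal)`. -/
def Zctr : RelObj := ⟨Bool, fun a b => a = b, fun a b => a = b⟩

/-!
The Public relation of `Y` is total and that of `Z` is the diagonal, so every morphism `Y → Z`
is constant; hence `Y ⇒ Z` is a two-point object with diagonal relations, and as `X` relates
only `false` to itself, every function `X → (Y ⇒ Z)` is a morphism: there are `2 ^ 2 = 4`.
A morphism `X × Y → Z`, on the other hand, only has to be constant on the slice `x = false`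
(the only Public-related pairs live there) and is free on the slice `x = true`: `2 · 2 ^ 2 = 8`.
-/

namespace DCHom

def equivFunOfEqOfRefl {X W : RelObj}
    (hP : ∀ a b, X.RP a b → a = b) (hS : ∀ a b, X.RS a b → a = b)
    (hWP : ∀ w, W.RP w w) (hWS : ∀ w, W.RS w w) : DCHom X W ≃ (X.carrier → W.carrier) :=
  Equiv.subtypeUnivEquiv fun h =>
    ⟨fun a b hab => hP a b hab ▸ hWP (h a), fun a b hab => hS a b hab ▸ hWS (h a)⟩

end DCHom

lemma yzHom_apply_eq (f : DCHom Yctr Zctr) (y y' : Bool) : f.1 y = f.1 y' :=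
  f.2.1 y y' trivial

lemma prodHom_apply_false_eq (h : DCHom (Xctr.prod Yctr) Zctr) (y y' : Bool) :
    h.1 (false, y) = h.1 (false, y') :=
  h.2.1 (false, y) (false, y') ⟨⟨rfl, rfl⟩, trivial⟩

def yzHomEquivBool : DCHom Yctr Zctr ≃ Bool where
  toFun f := f.1 false
  invFun b := ⟨fun _ => b, fun _ _ _ => rfl, fun _ _ _ => rfl⟩
  left_inv f := Subtype.ext <| funext fun y => yzHom_apply_eq f false y
  right_inv _ := rfl

def expHomEquiv : DCHom Xctr (Yctr.exp Zctr) ≃ (Bool → Bool) :=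
  (DCHom.equivFunOfEqOfRefl (X := Xctr) (W := Yctr.exp Zctr)
      (fun _ _ h => h.1.trans h.2.symm) (fun _ _ h => h.1.trans h.2.symm)
      (fun f y y' _ => yzHom_apply_eq f y y') (fun f _ _ hab => congrArg f.1 hab)).trans
    (Equiv.arrowCongr (Equiv.refl Bool) yzHomEquivBool)

def prodHomEquiv : DCHom (Xctr.prod Yctr) Zctr ≃ Bool × (Bool → Bool) where
  toFun h := (h.1 (false, false), fun y => h.1 (true, y))
  invFun cg := ⟨fun p => cond p.1 (cg.2 p.2) cg.1,
    fun _ _ ⟨⟨hp, hq⟩, _⟩ => by simp only [hp, hq]; rfl,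
    fun _ _ ⟨⟨hp, hq⟩, _⟩ => by simp only [hp, hq]; rfl⟩
  left_inv h := Subtype.ext <| funext fun
    | (true, _) => rfl
    | (false, y) => prodHom_apply_false_eq h false y
  right_inv _ := rfl

/-- The counterexample showing that Abadi et al.'s relational category `DC` (with
arbitrary binary relations) is not cartesian closed: `Hom(X × Y, Z)` has 8 elements
while `Hom(X, Y ⇒ Z)` has only 4, so the candidate exponential `Y ⇒ Z` cannot satisfy
the universal property of an exponential object (there is not even a bijection of
hom-sets). -/
theorem DC_not_cartesian_closed :
    Nat.card (DCHom (RelObj.prod Xctr Yctr) Zctr) = 8 ∧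
    Nat.card (DCHom Xctr (RelObj.exp Yctr Zctr)) = 4 ∧
    ¬ Nonempty (DCHom (RelObj.prod Xctr Yctr) Zctr ≃ DCHom Xctr (RelObj.exp Yctr Zctr)) := by
  have h8 : Nat.card (DCHom (RelObj.prod Xctr Yctr) Zctr) = 8 := by
    simp [Nat.card_congr prodHomEquiv]
  have h4 : Nat.card (DCHom Xctr (RelObj.exp Yctr Zctr)) = 4 := by
    simp [Nat.card_congr expHomEquiv]
  exact ⟨h8, h4, fun ⟨e⟩ => by simpa [h8, h4] using Nat.card_congr e⟩
end
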